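/- Assume f : ℝ → ℝ is smooth with f(0) = 0, f′(t) < 0 for all t ≥ 0, and f(t) → −∞ as t → +∞. Let H = (H₁, H₂) : ℍ²×ℂ* → ℝ² with H₁(x,y,u,v) = (2/3)·f(y³(u²+v²)) and H₂(x,y,u,v) = 2(x/y)(1 − f(y³(u²+v²))). Then for every (b₁, b₂) with b₁ < 0, the fiber H⁻¹(b₁, b₂) = {(x,y,u,v) : y > 0, (u,v) ≠ (0,0), H₁ = b₁, H₂ = b₂} is homeomorphic to ℝ × S¹. -/

import Mathlib

/-- The Hamiltonian function of the circle action: `H₁ = (2/3)·f(y³(u²+v²))`. -/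
noncomputable def H1 (f : ℝ → ℝ) (x y u v : ℝ) : ℝ :=
  (2 / 3) * f (y ^ 3 * (u ^ 2 + v ^ 2))

/-- The Hamiltonian function of the diagonal `ℝ*`-action:
`H₂ = 2(x/y)(1 − f(y³(u²+v²)))`. -/
noncomputable def H2 (f : ℝ → ℝ) (x y u v : ℝ) : ℝ :=
  2 * (x / y) * (1 - f (y ^ 3 * (u ^ 2 + v ^ 2)))


/-- Every fiber of `H = (H₁,H₂) : ℍ²×ℂ* → ℝ²` over a point of the half-plane
`{b₁ < 0}` is homeomorphic to `ℝ × S¹`. -/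
theorem stmt15 (f : ℝ → ℝ) (hf : ContDiff ℝ (⊤ : ℕ∞) f) (hf0 : f 0 = 0)
    (hf' : ∀ t : ℝ, 0 ≤ t → deriv f t < 0)
    (hftop : Filter.Tendsto f Filter.atTop Filter.atBot)
    (b₁ b₂ : ℝ) (hb : b₁ < 0) :
    Nonempty
      (({p : ℝ × ℝ × ℝ × ℝ // 0 < p.2.1 ∧ (p.2.2.1, p.2.2.2) ≠ (0, 0) ∧
          H1 f p.1 p.2.1 p.2.2.1 p.2.2.2 = b₁ ∧
          H2 f p.1 p.2.1 p.2.2.1 p.2.2.2 = b₂}) ≃ₜ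
        ℝ × Metric.sphere (0 : ℂ) 1) := by
  have hcont := hf.continuous
  set m : ℝ := 3/2 * b₁ with hm_def
  have hm : m < 0 := by rw [hm_def]; nlinarith
  have h1m : (0:ℝ) < 1 - m := by linarith
  set k : ℝ := b₂ / (2*(1-m)) with hk_def
  obtain ⟨T, hT, hT0⟩ : ∃ T, f T ≤ m ∧ 0 ≤ T := by
    have h1 := hftop.eventually (Filter.eventually_le_atBot m)
    exact (h1.and (Filter.eventually_ge_atTop 0)).exists
  obtain ⟨c, hcmem, hfc⟩ : ∃ c ∈ Set.Icc (0:ℝ) T, f c = m := by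
    have h := intermediate_value_Icc' hT0 hcont.continuousOn
    exact h ⟨hT, by rw [hf0]; linarith⟩
  have hc0 : 0 < c := by
    rcases eq_or_lt_of_le hcmem.1 with h | h
    · exfalso; rw [← h, hf0] at hfc; linarith
    · exact h
  have hanti : StrictAntiOn f (Set.Ici 0) :=
    strictAntiOn_of_deriv_neg (convex_Ici 0) hcont.continuousOn
      (fun x hx => hf' x (le_of_lt (by rwa [interior_Ici] at hx)))
  have hinj := hanti.injOn
  have hkey : ∀ y u v : ℝ, 0 < y → (2/3 : ℝ) * f (y^3*(u^2+v^2)) = b₁ →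
      y^3*(u^2+v^2) = c := by
    intro y u v hy h1
    have ht0 : (0:ℝ) ≤ y^3*(u^2+v^2) := by positivity
    have hft : f (y^3*(u^2+v^2)) = m := by rw [hm_def]; linarith
    exact hinj (Set.mem_Ici.mpr ht0) (Set.mem_Ici.mpr hc0.le) (hft.trans hfc.symm)
  have hnorm : ∀ u v : ℝ, ‖(u:ℂ) + v*Complex.I‖ = Real.sqrt (u^2+v^2) := by
    intro u v
    rw [Complex.norm_add_mul_I]
  have hwne : ∀ u v : ℝ, (u, v) ≠ ((0:ℝ), (0:ℝ)) → (u:ℂ) + v*Complex.I ≠ 0 := by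
    intro u v huv h
    apply huv
    rw [Complex.ext_iff] at h
    simp at h
    simp [h.1, h.2]
  refine ⟨{
    toFun := fun p => (Real.log p.1.2.1,
      ⟨((p.1.2.2.1:ℂ) + p.1.2.2.2*Complex.I) / (‖(p.1.2.2.1:ℂ) + p.1.2.2.2*Complex.I‖ : ℝ), by
        have hw := hwne _ _ p.2.2.1
        rw [mem_sphere_zero_iff_norm, norm_div, Complex.norm_real, norm_norm,
          div_self (norm_ne_zero_iff.mpr hw)]⟩),
    invFun := fun q => ⟨(k * Real.exp q.1, Real.exp q.1,
        Real.sqrt (c / (Real.exp q.1)^3) * (q.2 : ℂ).re,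
        Real.sqrt (c / (Real.exp q.1)^3) * (q.2 : ℂ).im), by
      obtain ⟨s, θ⟩ := q
      obtain ⟨θ, hθ⟩ := θ
      have hθn : ‖θ‖ = 1 := mem_sphere_zero_iff_norm.mp hθ
      have hθ2 : θ.re^2 + θ.im^2 = 1 := by
        have h1 : Complex.normSq θ = 1 := by
          rw [Complex.normSq_eq_norm_sq, hθn]; norm_num
        have h2 := Complex.normSq_apply θ
        nlinarith
      have hes := Real.exp_pos s
      have hr : (0:ℝ) < Real.sqrt (c / (Real.exp s)^3) := Real.sqrt_pos.mpr (by positivity)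
      have hr2 : (Real.sqrt (c / (Real.exp s)^3))^2 = c / (Real.exp s)^3 :=
        Real.sq_sqrt (by positivity)
      have ht : (Real.exp s)^3 *
          ((Real.sqrt (c / (Real.exp s)^3) * θ.re)^2 +
           (Real.sqrt (c / (Real.exp s)^3) * θ.im)^2) = c := by
        calc (Real.exp s)^3 * ((Real.sqrt (c / (Real.exp s)^3) * θ.re)^2 +
              (Real.sqrt (c / (Real.exp s)^3) * θ.im)^2)
            = (Real.exp s)^3 * ((Real.sqrt (c / (Real.exp s)^3))^2 * (θ.re^2 + θ.im^2)) := by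
              ring
          _ = (Real.exp s)^3 * (c / (Real.exp s)^3 * 1) := by rw [hr2, hθ2]
          _ = c := by field_simp
      refine ⟨hes, ?_, ?_, ?_⟩
      · intro h
        rw [Prod.mk.injEq] at h
        have h1 : θ.re = 0 := by
          rcases mul_eq_zero.mp h.1 with h' | h'
          · exact absurd h' hr.ne'
          · exact h'
        have h2 : θ.im = 0 := by
          rcases mul_eq_zero.mp h.2 with h' | h'
          · exact absurd h' hr.ne'
          · exact h'
        rw [h1, h2] at hθ2; norm_num at hθ2
      · show (2/3 : ℝ) * f _ = b₁
        rw [ht, hfc, hm_def]; ring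
      · show 2 * (k * Real.exp s / Real.exp s) * (1 - f _) = b₂
        rw [ht, hfc, mul_div_assoc, div_self hes.ne', mul_one, hk_def]
        field_simp⟩,
    left_inv := by
      rintro ⟨⟨x, y, u, v⟩, hy, hne, h1, h2⟩
      simp only [H1] at h1
      simp only [H2] at h2
      have htc : y^3*(u^2+v^2) = c := hkey y u v hy h1
      have hly : Real.exp (Real.log y) = y := Real.exp_log hy
      have hy3 : (0:ℝ) < y^3 := by positivity
      have huv : u^2 + v^2 = c / y^3 := by
        rw [eq_div_iff hy3.ne']; linarith [htc]
      have hwn : ‖(u:ℂ) + v*Complex.I‖ = Real.sqrt (c / y^3) := by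
        rw [hnorm, huv]
      have hsne : Real.sqrt (c / y^3) ≠ 0 := (Real.sqrt_pos.mpr (by positivity)).ne'
      apply Subtype.ext
      simp only
      rw [hly]
      have hx : k * y = x := by
        rw [htc, hfc] at h2
        rw [hk_def, ← h2]
        field_simp
      refine Prod.ext ?_ (Prod.ext rfl (Prod.ext ?_ ?_))
      · exact hx
      · show Real.sqrt (c / y^3) * (((u:ℂ) + v*Complex.I) / (‖(u:ℂ) + v*Complex.I‖:ℝ)).re = u
        rw [Complex.div_ofReal_re, hwn]
        have : ((u:ℂ) + v*Complex.I).re = u := by simp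
        rw [this, mul_div_cancel₀ _ hsne]
      · show Real.sqrt (c / y^3) * (((u:ℂ) + v*Complex.I) / (‖(u:ℂ) + v*Complex.I‖:ℝ)).im = v
        rw [Complex.div_ofReal_im, hwn]
        have : ((u:ℂ) + v*Complex.I).im = v := by simp
        rw [this, mul_div_cancel₀ _ hsne]
    right_inv := by
      rintro ⟨s, θ, hθ⟩
      have hθn : ‖θ‖ = 1 := mem_sphere_zero_iff_norm.mp hθ
      have hes := Real.exp_pos s
      have hr : (0:ℝ) < Real.sqrt (c / (Real.exp s)^3) := Real.sqrt_pos.mpr (by positivity)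
      set r := Real.sqrt (c / (Real.exp s)^3) with hr_def
      have hw' : ((r*θ.re : ℝ):ℂ) + (r*θ.im : ℝ)*Complex.I = (r:ℂ)*θ := by
        apply Complex.ext <;> simp
      refine Prod.ext (Real.log_exp s) (Subtype.ext ?_)
      simp only
      rw [hw', norm_mul, Complex.norm_real, Real.norm_eq_abs, abs_of_pos hr, hθn, mul_one]
      have : (r:ℂ) ≠ 0 := by exact_mod_cast hr.ne'
      exact mul_div_cancel_left₀ θ this
    continuous_toFun := by
      apply Continuous.prodMk
      · exact Continuous.log (by fun_prop) (fun p => p.2.1.ne')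
      · apply Continuous.subtype_mk
        have hwc : Continuous fun p : {p : ℝ × ℝ × ℝ × ℝ // 0 < p.2.1 ∧
            (p.2.2.1, p.2.2.2) ≠ (0, 0) ∧ H1 f p.1 p.2.1 p.2.2.1 p.2.2.2 = b₁ ∧
            H2 f p.1 p.2.1 p.2.2.1 p.2.2.2 = b₂} =>
            ((p.1.2.2.1:ℂ) + p.1.2.2.2*Complex.I) := by fun_prop
        exact hwc.div (Complex.continuous_ofReal.comp hwc.norm)
          (fun p => by
            exact_mod_cast Complex.ofReal_ne_zero.mpr
              (norm_ne_zero_iff.mpr (hwne _ _ p.2.2.1)))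
    continuous_invFun := by
      apply Continuous.subtype_mk
      have h1 : Continuous fun q : ℝ × Metric.sphere (0:ℂ) 1 => Real.exp q.1 := by fun_prop
      have hrc : Continuous fun q : ℝ × Metric.sphere (0:ℂ) 1 =>
          Real.sqrt (c / (Real.exp q.1)^3) := by
        apply Real.continuous_sqrt.comp
        exact continuous_const.div (by fun_prop) (fun q => by positivity)
      have hre : Continuous fun q : ℝ × Metric.sphere (0:ℂ) 1 => ((q.2 : ℂ)).re := by fun_prop
      have him : Continuous fun q : ℝ × Metric.sphere (0:ℂ) 1 => ((q.2 : ℂ)).im := by fun_prop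
      exact ((continuous_const.mul h1).prodMk (h1.prodMk
        ((hrc.mul hre).prodMk (hrc.mul him)))) }⟩
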